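/- Let $r,\beta>0$, $\theta\in\mathbb{R}$, $T>0$, $\gamma>0$ with $\gamma\ne1$, $\alpha\in(0,1)$, $\gamma_1:=1-\alpha(1-\gamma)$, $0<L_0<L_1$, $\varepsilon_0>\varepsilon_1\ge0$, and let $\psi_1:[0,T]\to\mathbb{R}$ be continuously differentiable with $\psi_1'(\tau)+r\psi_1(\tau)<\varepsilon_0-\varepsilon_1$ for all $\tau\in[0,T]$. For $\varepsilon>0$ define $\underline{z}(\tau,x):=\min\{(1-\varepsilon)\mathcal{E}(\tau),\psi_1(\tau)\}-\varepsilon^5\big(x-\tfrac{2}{\varepsilon^3}\big)^2\mathbf{1}_{\{x\le 2/\varepsilon^3\}}$. Then there exists $\varepsilon^*>0$ such that for every $\varepsilon\in(0,\varepsilon^*)$ and every $(\tau,x)$ with $0<\tau<T$, $x>1/\varepsilon^3$, $x\ne 2/\varepsilon^3$ and $(1-\varepsilon)\mathcal{E}(\tau)\ne\psi_1(\tau)$, one has $\partial_\tau\underline{z}(\tau,x)-\tfrac{\theta^2}{2}\partial_{xx}\underline{z}(\tau,x)-\big(\beta-r+\tfrac{\theta^2}{2}\big)\partial_x\underline{z}(\tau,x)+r\,\underline{z}(\tau,x)\;\le\;U(x)$.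 -/

import Mathlib

/-!
In `τ` the barrier is the minimum of `(1 - ε)𝓔`, which solves `u' + r u = (1 - ε)(ε0 - ε1)`,
and `ψ1`, which by compactness of `[0, T]` satisfies `ψ1' + r ψ1 ≤ (ε0 - ε1) - δ` for a uniform
`δ > 0`. Away from the switching locus the minimum inherits the weaker of the two bounds, which
still falls short of `ε0 - ε1` by order `ε`. In `x`, the penalty `ε⁵ (x - 2/ε³)²` and its
derivatives contribute `O(ε²)` on `x > 1/ε³`, where `|x - 2/ε³| < 1/ε³`, and the running-gain
term satisfies `A e^{-x/γ1} ≤ |A| γ1 / x = O(ε³)`. For small `ε` the gain of order `ε` wins.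
-/

open Real Set

/-- The barrier `z̲(τ,x) = min{(1-ε)𝓔(τ), ψ1(τ)} - ε⁵(x-2/ε³)² 1_{x≤2/ε³}`,
where `𝓔(τ) = (ε0-ε1)(1-e^{-rτ})/r`. -/
noncomputable def zunder (ψ1 : ℝ → ℝ) (r ε0 ε1 ε τ x : ℝ) : ℝ :=
  min ((1 - ε) * ((ε0 - ε1) * (1 - Real.exp (-(r * τ))) / r)) (ψ1 τ)
    - ε ^ 5 * (x - 2 / ε ^ 3) ^ 2 * (if x ≤ 2 / ε ^ 3 then (1:ℝ) else 0)

open Filter Topology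

theorem HasDerivAt.min_of_lt_left {f g : ℝ → ℝ} {f' τ : ℝ} (hf : HasDerivAt f f' τ)
    (hg : ContinuousAt g τ) (h : f τ < g τ) : HasDerivAt (fun t => min (f t) (g t)) f' τ :=
  hf.congr_of_eventuallyEq <|
    (hf.continuousAt.eventually_lt hg h).mono fun _ ht => min_eq_left ht.le

theorem HasDerivAt.min_of_lt_right {f g : ℝ → ℝ} {g' τ : ℝ} (hg : HasDerivAt g g' τ)
    (hf : ContinuousAt f τ) (h : g τ < f τ) : HasDerivAt (fun t => min (f t) (g t)) g' τ :=
  hg.congr_of_eventuallyEq <|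
    (hg.continuousAt.eventually_lt hf h).mono fun _ ht => min_eq_right ht.le

theorem deriv_min_add_mul_le {f g : ℝ → ℝ} {f' g' r a τ : ℝ} (hf : HasDerivAt f f' τ)
    (hg : HasDerivAt g g' τ) (hne : f τ ≠ g τ) (hfa : f' + r * f τ ≤ a)
    (hga : g' + r * g τ ≤ a) :
    deriv (fun t => min (f t) (g t)) τ + r * min (f τ) (g τ) ≤ a := by
  rcases hne.lt_or_gt with h | h
  · rwa [(hf.min_of_lt_left hg.continuousAt h).deriv, min_eq_left h.le]
  · rwa [(hg.min_of_lt_right hf.continuousAt h).deriv, min_eq_right h.le]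

theorem hasDerivAt_const_mul_one_sub_exp_div {r : ℝ} (hr : r ≠ 0) (c τ : ℝ) :
    HasDerivAt (fun t => c * (1 - exp (-(r * t))) / r) (c * exp (-(r * τ))) τ := by
  refine ((((((hasDerivAt_id' τ).const_mul r).fun_neg.exp).const_sub 1).const_mul c).div_const
    r).congr_deriv ?_
  field_simp

theorem Real.exp_neg_le_inv {y : ℝ} (hy : 0 < y) : exp (-y) ≤ y⁻¹ := by
  rw [exp_neg]
  exact inv_anti₀ hy (by linarith [add_one_le_exp y])

noncomputable def penalty (k c x : ℝ) : ℝ :=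
  k * (x - c) ^ 2 * if x ≤ c then 1 else 0

section penalty

variable {k c x : ℝ}

theorem penalty_eventuallyEq_of_lt (h : x < c) :
    penalty k c =ᶠ[𝓝 x] fun y => k * (y - c) ^ 2 := by
  filter_upwards [Iio_mem_nhds h] with y hy
  simp [penalty, (mem_Iio.mp hy).le]

theorem penalty_eventuallyEq_of_gt (h : c < x) : penalty k c =ᶠ[𝓝 x] fun _ => 0 := by
  filter_upwards [Ioi_mem_nhds h] with y hy
  simp [penalty, not_le.mpr (mem_Ioi.mp hy)]

theorem deriv_mul_sub_sq (k c : ℝ) :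
    deriv (fun y => k * (y - c) ^ 2) = fun y => 2 * k * (y - c) := by
  ext y
  have h := (((hasDerivAt_id' y).sub_const c).fun_pow 2).const_mul k
  rw [h.deriv]
  ring

theorem generator_penalty_le {a b r d : ℝ} (hk : 0 ≤ k) (hr : 0 ≤ r) (hd : 0 ≤ d)
    (hx : c - d < x) (hxc : x ≠ c) :
    a * deriv (deriv (penalty k c)) x + b * deriv (penalty k c) x - r * penalty k c x
      ≤ 2 * (|a| + |b| * d) * k := by
  rcases hxc.lt_or_gt with h | h
  · have hp := penalty_eventuallyEq_of_lt (k := k) h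
    have hd1 : deriv (penalty k c) x = 2 * k * (x - c) := by
      rw [hp.deriv_eq, deriv_mul_sub_sq]
    have hd2 : deriv (deriv (penalty k c)) x = 2 * k := by
      rw [hp.deriv.deriv_eq, deriv_mul_sub_sq]
      simp [(((hasDerivAt_id' x).sub_const c).const_mul (2 * k)).deriv]
    rw [hd1, hd2, hp.eq_of_nhds]
    have hb : b * (x - c) ≤ |b| * d := by
      calc b * (x - c) ≤ |b| * |x - c| := by rw [← abs_mul]; exact le_abs_self _
        _ ≤ |b| * d := by
          gcongr
          rw [abs_of_neg (by linarith)]; linarith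
    nlinarith [le_abs_self a, mul_nonneg hr (mul_nonneg hk (sq_nonneg (x - c)))]
  · have hp := penalty_eventuallyEq_of_gt (k := k) h
    rw [hp.deriv_eq, hp.deriv.deriv_eq, hp.eq_of_nhds]
    simp only [deriv_const', mul_zero, sub_zero, add_zero]
    positivity

end penalty

theorem zunder_eq_sub_penalty (ψ1 : ℝ → ℝ) (r ε0 ε1 ε τ : ℝ) :
    (fun x => zunder ψ1 r ε0 ε1 ε τ x) = fun x =>
      min ((1 - ε) * ((ε0 - ε1) * (1 - exp (-(r * τ))) / r)) (ψ1 τ)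
        - penalty (ε ^ 5) (2 / ε ^ 3) x :=
  rfl

section zunder

variable {ψ1 : ℝ → ℝ} {r ε0 ε1 ε τ x : ℝ}

theorem deriv_zunder_add_mul_min_le {ψ1' : ℝ → ℝ} {a : ℝ} (hr : r ≠ 0)
    (hψ1 : HasDerivAt ψ1 (ψ1' τ) τ)
    (hne : (1 - ε) * ((ε0 - ε1) * (1 - exp (-(r * τ))) / r) ≠ ψ1 τ)
    (hE : (1 - ε) * (ε0 - ε1) ≤ a) (hψ1a : ψ1' τ + r * ψ1 τ ≤ a) :
    deriv (fun t => zunder ψ1 r ε0 ε1 ε t x) τ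
      + r * min ((1 - ε) * ((ε0 - ε1) * (1 - exp (-(r * τ))) / r)) (ψ1 τ) ≤ a := by
  simp only [zunder, deriv_sub_const]
  refine deriv_min_add_mul_le
    ((hasDerivAt_const_mul_one_sub_exp_div hr (ε0 - ε1) τ).const_mul (1 - ε)) hψ1 hne ?_ hψ1a
  have : (1 - ε) * ((ε0 - ε1) * exp (-(r * τ)))
      + r * ((1 - ε) * ((ε0 - ε1) * (1 - exp (-(r * τ))) / r)) = (1 - ε) * (ε0 - ε1) := by
    field_simp
    ring
  linarith

theorem generator_zunder_le {a b : ℝ} (hε : 0 < ε) (hε1 : ε ≤ 1) (hr : 0 ≤ r)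
    (hx : 1 / ε ^ 3 < x) (hxc : x ≠ 2 / ε ^ 3) :
    r * zunder ψ1 r ε0 ε1 ε τ x - a * deriv (deriv fun z => zunder ψ1 r ε0 ε1 ε τ z) x
        - b * deriv (fun z => zunder ψ1 r ε0 ε1 ε τ z) x
      ≤ r * min ((1 - ε) * ((ε0 - ε1) * (1 - exp (-(r * τ))) / r)) (ψ1 τ)
        + 2 * (|a| + |b|) * ε ^ 2 := by
  have hpenalty := generator_penalty_le (a := a) (b := b) (d := 1 / ε ^ 3)
    (by positivity : (0:ℝ) ≤ ε ^ 5) hr (by positivity)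
    (by rwa [show 2 / ε ^ 3 - 1 / ε ^ 3 = 1 / ε ^ 3 by ring]) hxc
  have hε5 : 2 * (|a| + |b| * (1 / ε ^ 3)) * ε ^ 5 ≤ 2 * (|a| + |b|) * ε ^ 2 := by
    have : 2 * (|a| + |b| * (1 / ε ^ 3)) * ε ^ 5 = 2 * |a| * ε ^ 5 + 2 * |b| * ε ^ 2 := by
      field_simp
    nlinarith [abs_nonneg a, pow_le_pow_of_le_one hε.le hε1 (by norm_num : 2 ≤ 5)]
  rw [zunder_eq_sub_penalty]
  change r * (_ - penalty (ε ^ 5) (2 / ε ^ 3) x) - _ - _ ≤ _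
  simp only [deriv_const_sub', deriv.fun_neg]
  linarith

end zunder

theorem mul_exp_neg_div_le {A γ x : ℝ} (hγ : 0 < γ) (hx : 0 < x) :
    A * exp (-x / γ) ≤ |A| * γ * (1 / x) :=
  calc A * exp (-x / γ) ≤ |A| * (x / γ)⁻¹ := by
        rw [neg_div]
        exact (mul_le_mul_of_nonneg_right (le_abs_self A) (exp_pos _).le).trans
          (mul_le_mul_of_nonneg_left (Real.exp_neg_le_inv (by positivity)) (abs_nonneg A))
    _ = |A| * γ * (1 / x) := by field_simp

theorem one_div_le_sq_of_one_div_pow_three_lt {ε x : ℝ} (hε : 0 < ε) (hε1 : ε ≤ 1)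
    (hx : 1 / ε ^ 3 < x) : 1 / x ≤ ε ^ 2 := by
  have hxpos : 0 < x := lt_trans (by positivity) hx
  have hε32 : ε ^ 3 ≤ ε ^ 2 := pow_le_pow_of_le_one hε.le hε1 (by norm_num)
  rw [div_lt_iff₀ (by positivity)] at hx
  rw [div_le_iff₀ hxpos]
  nlinarith

theorem exists_pos_forall_mul_sq_le {C a b : ℝ} (hC : 0 ≤ C) (ha : 0 < a) (hb : 0 < b) :
    ∃ η > 0, ∀ ε ∈ Ioo 0 η, ε < 1 ∧ C * ε ^ 2 ≤ ε * a ∧ C * ε ^ 2 ≤ b := by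
  refine ⟨min 1 (min (a / (C + 1)) (b / (C + 1))), by positivity, ?_⟩
  rintro ε ⟨hε, hεη⟩
  simp only [lt_min_iff, lt_div_iff₀ (by positivity : 0 < C + 1)] at hεη
  obtain ⟨hε1, hεa, hεb⟩ := hεη
  exact ⟨hε1, by nlinarith, by nlinarith⟩

theorem stmt11_general (r β θ T γ α γ1 L0 L1 ε0 ε1 : ℝ) (ψ1 ψ1' : ℝ → ℝ)
    (hr : 0 < r)
    (hγ : 0 < γ) (hα : α ∈ Ioo (0:ℝ) 1)
    (hγ1 : γ1 = 1 - α * (1 - γ))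
    (hε : ε1 < ε0)
    (hψ1deriv : ∀ τ ∈ Icc (0:ℝ) T, HasDerivAt ψ1 (ψ1' τ) τ)
    (hψ1cont : ContinuousOn ψ1' (Icc 0 T))
    (hcost : ∀ τ ∈ Icc (0:ℝ) T, ψ1' τ + r * ψ1 τ < ε0 - ε1) :
    ∃ εstar > (0:ℝ), ∀ ε ∈ Ioo (0:ℝ) εstar, ∀ τ x : ℝ,
      0 < τ → τ < T → 1 / ε ^ 3 < x → x ≠ 2 / ε ^ 3 →
      (1 - ε) * ((ε0 - ε1) * (1 - Real.exp (-(r * τ))) / r) ≠ ψ1 τ →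
      deriv (fun t => zunder ψ1 r ε0 ε1 ε t x) τ
        - θ ^ 2 / 2 * deriv (deriv (fun z => zunder ψ1 r ε0 ε1 ε τ z)) x
        - (β - r + θ ^ 2 / 2) * deriv (fun z => zunder ψ1 r ε0 ε1 ε τ z) x
        + r * zunder ψ1 r ε0 ε1 ε τ x
      ≤ (ε0 - ε1) -
          (γ1 / (1 - γ1) * (L1 ^ ((γ1 - γ) / γ1) - L0 ^ ((γ1 - γ) / γ1)))
            * Real.exp (-x / γ1) := by
  set B := β - r + θ ^ 2 / 2
  set A := γ1 / (1 - γ1) * (L1 ^ ((γ1 - γ) / γ1) - L0 ^ ((γ1 - γ) / γ1))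
  have hγ1pos : 0 < γ1 := by nlinarith [hα.1, hα.2]
  obtain ⟨δ, hδ, hgap⟩ := isCompact_Icc.exists_forall_le' (a := 0)
    (continuousOn_const.sub (hψ1cont.add (continuousOn_const.mul
      fun t ht => (hψ1deriv t ht).continuousAt.continuousWithinAt)))
    fun t ht => sub_pos.2 (hcost t ht)
  set C := 2 * (|θ ^ 2 / 2| + |B|) + |A| * γ1
  obtain ⟨η, hη, hsmall⟩ :=
    exists_pos_forall_mul_sq_le (C := C) (by positivity) (sub_pos.2 hε) hδ
  refine ⟨η, hη, fun ε hεη τ x hτ hτT hx hxc hne => ?_⟩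
  obtain ⟨hε1, hCΔ, hCδ⟩ := hsmall ε hεη
  have hε0 : 0 < ε := hεη.1
  have hgapτ : δ ≤ ε0 - ε1 - (ψ1' τ + r * ψ1 τ) := hgap τ ⟨hτ.le, hτT.le⟩
  have htime := deriv_zunder_add_mul_min_le (x := x) (a := ε0 - ε1 - C * ε ^ 2) hr.ne'
    (hψ1deriv τ ⟨hτ.le, hτT.le⟩) hne (by linarith) (by linarith)
  have hspace := generator_zunder_le (ψ1 := ψ1) (ε0 := ε0) (ε1 := ε1) (τ := τ)
    (a := θ ^ 2 / 2) (b := B) hε0 hε1.le hr.le hx hxc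
  have hgain : A * exp (-x / γ1) ≤ |A| * γ1 * ε ^ 2 :=
    (mul_exp_neg_div_le hγ1pos (lt_trans (by positivity) hx)).trans <| by
      gcongr
      exact one_div_le_sq_of_one_div_pow_three_lt hε0 hε1.le hx
  linarith

/-- For all small `ε > 0`, `z̲` is a subsolution
`∂_τ z̲ - (θ²/2) ∂_{xx} z̲ - (β-r+θ²/2) ∂_x z̲ + r z̲ ≤ U(x)`
on `(0,T)×(1/ε³,∞)` away from the kink loci. -/
theorem stmt11 (r β θ T γ α γ1 L0 L1 ε0 ε1 : ℝ) (ψ1 ψ1' : ℝ → ℝ)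
    (hr : 0 < r) (hβ : 0 < β) (hT : 0 < T)
    (hγ : 0 < γ) (hγne : γ ≠ 1) (hα : α ∈ Ioo (0:ℝ) 1)
    (hγ1 : γ1 = 1 - α * (1 - γ)) (hL0 : 0 < L0) (hL : L0 < L1)
    (hε1 : 0 ≤ ε1) (hε : ε1 < ε0)
    (hψ1deriv : ∀ τ ∈ Icc (0:ℝ) T, HasDerivAt ψ1 (ψ1' τ) τ)
    (hψ1cont : ContinuousOn ψ1' (Icc 0 T))
    (hcost : ∀ τ ∈ Icc (0:ℝ) T, ψ1' τ + r * ψ1 τ < ε0 - ε1) :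
    ∃ εstar > (0:ℝ), ∀ ε ∈ Ioo (0:ℝ) εstar, ∀ τ x : ℝ,
      0 < τ → τ < T → 1 / ε ^ 3 < x → x ≠ 2 / ε ^ 3 →
      (1 - ε) * ((ε0 - ε1) * (1 - Real.exp (-(r * τ))) / r) ≠ ψ1 τ →
      deriv (fun t => zunder ψ1 r ε0 ε1 ε t x) τ
        - θ ^ 2 / 2 * deriv (deriv (fun z => zunder ψ1 r ε0 ε1 ε τ z)) x
        - (β - r + θ ^ 2 / 2) * deriv (fun z => zunder ψ1 r ε0 ε1 ε τ z) x
        + r * zunder ψ1 r ε0 ε1 ε τ x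
      ≤ (ε0 - ε1) -
          (γ1 / (1 - γ1) * (L1 ^ ((γ1 - γ) / γ1) - L0 ^ ((γ1 - γ) / γ1)))
            * Real.exp (-x / γ1) :=
  stmt11_general r β θ T γ α γ1 L0 L1 ε0 ε1 ψ1 ψ1' hr hγ hα hγ1 hε hψ1deriv hψ1cont hcost
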